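/- For every k, j ∈ {1,2}, every real parameters a, c, and every Q ≠ P in ℝ², the Laplacian in Q of the parameterized family satisfies ∇² H̃^{a,c}_{kj}(Q,P) = Ũ_{kj}(Q,P) + (4a + 32c − 1) δ_{kj}, where Ũ_{kj}(Q,P) = −δ_{kj} log r + R_k R_j/r². -/

import Mathlib

open Real

/-- Partial derivative of a scalar function on ℝ² with respect to the `l`-th coordinate. -/
noncomputable def pd2 (f : EuclideanSpace ℝ (Fin 2) → ℝ) (l : Fin 2)
    (Q : EuclideanSpace ℝ (Fin 2)) : ℝ :=
  fderiv ℝ f Q (EuclideanSpace.single l 1)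

/-- The parameterized 2D family
H̃^{a,c}_{kj}(Q,P) = δ_{kj} r² (a − (1/2) log r) + ∂²/∂q_k∂q_j [ r⁴ (c + (1/32) log r) ]. -/
noncomputable def Hac (P : EuclideanSpace ℝ (Fin 2)) (a c : ℝ) (k j : Fin 2)
    (Q : EuclideanSpace ℝ (Fin 2)) : ℝ :=
  (if k = j then (1 : ℝ) else 0) * ‖Q - P‖ ^ 2 * (a - (1 / 2) * Real.log ‖Q - P‖) +
    pd2 (fun Q' =>
      pd2 (fun Q'' => ‖Q'' - P‖ ^ 4 * (c + (1 / 32) * Real.log ‖Q'' - P‖)) j Q') k Q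

/-! Write `s = r² = ‖Q - P‖²`. For a profile `g`, `∂_k ∂_j g(s) = 2 δ_kj g'(s) + 4 R_k R_j g''(s)`,
so near `Q` the kernel `H̃^{a,c}_{kj}` has the form `δ_kj A(s) + R_k R_j B(s)` with
`A(s) = (a + 4c + 1/32) s - (3/16) s log s` and `B(s) = 8c + (log s)/8 + 3/16`. In the plane the
Laplacian of such a form is `δ_kj (4A' + 4sA'' + 2B) + R_k R_j (12B' + 4sB'')`, and substituting
`A` and `B` gives the claim. -/

open Topology

local notation "ℝ²" => EuclideanSpace ℝ (Fin 2)

lemma hasFDerivAt_comp_norm_sub_sq {E : Type*} [NormedAddCommGroup E] [InnerProductSpace ℝ E]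
    {g : ℝ → ℝ} {g' : ℝ} {P Q : E} (hg : HasDerivAt g g' (‖Q - P‖ ^ 2)) :
    HasFDerivAt (fun x => g (‖x - P‖ ^ 2)) ((2 * g') • innerSL ℝ (Q - P)) Q := by
  refine (hg.comp_hasFDerivAt Q ((hasFDerivAt_id Q).sub_const P).norm_sq).congr_fderiv ?_
  ext v
  simp
  ring

lemma hasFDerivAt_sub_apply {ι : Type*} [Fintype ι] (P Q : EuclideanSpace ℝ ι) (m : ι) :
    HasFDerivAt (fun x : EuclideanSpace ℝ ι => (x - P) m)
      (EuclideanSpace.proj m : StrongDual ℝ (EuclideanSpace ℝ ι)) Q := by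
  simpa using
    (EuclideanSpace.proj m : StrongDual ℝ (EuclideanSpace ℝ ι)).hasFDerivAt.sub_const (P m)

lemma innerSL_single_one {ι : Type*} [Fintype ι] [DecidableEq ι] (v : EuclideanSpace ℝ ι)
    (l : ι) : innerSL ℝ v (EuclideanSpace.single l 1) = v l := by
  rw [innerSL_apply_apply, EuclideanSpace.inner_single_right]
  simp

lemma proj_single_one {ι : Type*} [DecidableEq ι] (m l : ι) :
    (EuclideanSpace.proj m : StrongDual ℝ (EuclideanSpace ℝ ι)) (EuclideanSpace.single l 1) =
      if l = m then 1 else 0 := by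
  simp [PiLp.single_apply, eq_comm]

lemma norm_sub_sq_pos {E : Type*} [NormedAddCommGroup E] {P Q : E} (hQ : Q ≠ P) :
    0 < ‖Q - P‖ ^ 2 :=
  pow_pos (norm_sub_pos_iff.2 hQ) 2

lemma norm_sq_fin_two (v : ℝ²) : ‖v‖ ^ 2 = v 0 ^ 2 + v 1 ^ 2 := by
  simp [EuclideanSpace.norm_sq_eq, Fin.sum_univ_two]

noncomputable def laplacian2 (f : ℝ² → ℝ) (Q : ℝ²) : ℝ :=
  ∑ l : Fin 2, pd2 (fun x => pd2 f l x) l Q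

noncomputable def radialForm (P : ℝ²) (d : ℝ) (A B : ℝ → ℝ) (k j : Fin 2) (x : ℝ²) : ℝ :=
  d * A (‖x - P‖ ^ 2) + (x - P) k * (x - P) j * B (‖x - P‖ ^ 2)

section Plane

variable {P Q : ℝ²}

lemma pd2_eq_of_hasFDerivAt {f : ℝ² → ℝ} {f' : StrongDual ℝ ℝ²} (h : HasFDerivAt f f' Q)
    (l : Fin 2) : pd2 f l Q = f' (EuclideanSpace.single l 1) := by
  rw [pd2, h.fderiv]

lemma pd2_congr {f g : ℝ² → ℝ} (h : f =ᶠ[𝓝 Q] g) (l : Fin 2) : pd2 f l Q = pd2 g l Q := by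
  rw [pd2, pd2, h.fderiv_eq]

lemma laplacian2_congr {f g : ℝ² → ℝ} (h : f =ᶠ[𝓝 Q] g) : laplacian2 f Q = laplacian2 g Q := by
  unfold laplacian2
  congr 1 with l
  exact pd2_congr (h.eventuallyEq_nhds.mono fun x hx => pd2_congr hx l) l

lemma pd2_comp_norm_sub_sq {g : ℝ → ℝ} {g' : ℝ} (hg : HasDerivAt g g' (‖Q - P‖ ^ 2)) (l : Fin 2) :
    pd2 (fun x => g (‖x - P‖ ^ 2)) l Q = 2 * g' * (Q - P) l := by
  rw [pd2_eq_of_hasFDerivAt (hasFDerivAt_comp_norm_sub_sq hg)]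
  simp only [smul_apply, smul_eq_mul, innerSL_single_one]

lemma pd2_pd2_comp_norm_sub_sq {g g' : ℝ → ℝ} {g'' : ℝ} (hg : ∀ t > 0, HasDerivAt g (g' t) t)
    (hg' : HasDerivAt g' g'' (‖Q - P‖ ^ 2)) (hQ : Q ≠ P) (k j : Fin 2) :
    pd2 (fun x => pd2 (fun y => g (‖y - P‖ ^ 2)) j x) k Q =
      2 * (if k = j then 1 else 0) * g' (‖Q - P‖ ^ 2) + 4 * (Q - P) k * (Q - P) j * g'' := by
  have hnear : (fun x => pd2 (fun y => g (‖y - P‖ ^ 2)) j x) =ᶠ[𝓝 Q]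
      fun x => 2 * g' (‖x - P‖ ^ 2) * (x - P) j := by
    filter_upwards [eventually_ne_nhds hQ] with x hx
    exact pd2_comp_norm_sub_sq (hg _ (norm_sub_sq_pos hx)) j
  rw [pd2_congr hnear, pd2_eq_of_hasFDerivAt
    (((hasFDerivAt_comp_norm_sub_sq hg').const_mul 2).fun_mul (hasFDerivAt_sub_apply P Q j))]
  simp only [add_apply, smul_apply, smul_eq_mul, innerSL_single_one, proj_single_one]
  ring

lemma pd2_radialForm {A B : ℝ → ℝ} {A' B' : ℝ} (d : ℝ) (k j l : Fin 2)
    (hA : HasDerivAt A A' (‖Q - P‖ ^ 2)) (hB : HasDerivAt B B' (‖Q - P‖ ^ 2)) :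
    pd2 (radialForm P d A B k j) l Q =
      2 * d * A' * (Q - P) l +
        ((if l = k then 1 else 0) * (Q - P) j + (if l = j then 1 else 0) * (Q - P) k) *
          B (‖Q - P‖ ^ 2) +
        2 * (Q - P) k * (Q - P) j * (Q - P) l * B' := by
  unfold radialForm
  rw [pd2_eq_of_hasFDerivAt (((hasFDerivAt_comp_norm_sub_sq hA).const_mul d).fun_add
    (((hasFDerivAt_sub_apply P Q k).fun_mul (hasFDerivAt_sub_apply P Q j)).fun_mul
      (hasFDerivAt_comp_norm_sub_sq hB)))]
  simp only [add_apply, smul_apply, smul_eq_mul, innerSL_single_one, proj_single_one]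
  ring

lemma pd2_pd2_radialForm {A A' B B' : ℝ → ℝ} {A'' B'' : ℝ} (d : ℝ) (k j l : Fin 2)
    (hA : ∀ t > 0, HasDerivAt A (A' t) t) (hA' : HasDerivAt A' A'' (‖Q - P‖ ^ 2))
    (hB : ∀ t > 0, HasDerivAt B (B' t) t) (hB' : HasDerivAt B' B'' (‖Q - P‖ ^ 2)) (hQ : Q ≠ P) :
    pd2 (fun y => pd2 (radialForm P d A B k j) l y) l Q =
      d * (2 * A' (‖Q - P‖ ^ 2) + 4 * (Q - P) l ^ 2 * A'') +
        2 * (if l = k then 1 else 0) * (if l = j then 1 else 0) * B (‖Q - P‖ ^ 2) +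
        4 * ((if l = k then 1 else 0) * (Q - P) j + (if l = j then 1 else 0) * (Q - P) k) *
          (Q - P) l * B' (‖Q - P‖ ^ 2) +
        2 * (Q - P) k * (Q - P) j * B' (‖Q - P‖ ^ 2) +
        4 * (Q - P) k * (Q - P) j * (Q - P) l ^ 2 * B'' := by
  have hnear : (fun y => pd2 (radialForm P d A B k j) l y) =ᶠ[𝓝 Q] fun y =>
      2 * d * A' (‖y - P‖ ^ 2) * (y - P) l +
        ((if l = k then 1 else 0) * (y - P) j + (if l = j then 1 else 0) * (y - P) k) *
          B (‖y - P‖ ^ 2) +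
        2 * (y - P) k * (y - P) j * (y - P) l * B' (‖y - P‖ ^ 2) := by
    filter_upwards [eventually_ne_nhds hQ] with y hy
    exact pd2_radialForm d k j l (hA _ (norm_sub_sq_pos hy)) (hB _ (norm_sub_sq_pos hy))
  have hR := hasFDerivAt_sub_apply P Q
  have hrad := ((hasFDerivAt_comp_norm_sub_sq hA').const_mul (2 * d)).fun_mul (hR l)
  have hlin := (((hR j).const_mul (if l = k then (1 : ℝ) else 0)).fun_add
    ((hR k).const_mul (if l = j then (1 : ℝ) else 0))).fun_mul
      (hasFDerivAt_comp_norm_sub_sq (hB _ (norm_sub_sq_pos hQ)))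
  have hcub := ((((hR k).const_mul 2).fun_mul (hR j)).fun_mul (hR l)).fun_mul
    (hasFDerivAt_comp_norm_sub_sq hB')
  rw [pd2_congr hnear, pd2_eq_of_hasFDerivAt ((hrad.fun_add hlin).fun_add hcub)]
  simp only [add_apply, smul_apply, smul_eq_mul, innerSL_single_one, proj_single_one, if_true]
  ring

lemma laplacian2_radialForm {A A' B B' : ℝ → ℝ} {A'' B'' : ℝ} (d : ℝ) (k j : Fin 2)
    (hA : ∀ t > 0, HasDerivAt A (A' t) t) (hA' : HasDerivAt A' A'' (‖Q - P‖ ^ 2))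
    (hB : ∀ t > 0, HasDerivAt B (B' t) t) (hB' : HasDerivAt B' B'' (‖Q - P‖ ^ 2)) (hQ : Q ≠ P) :
    laplacian2 (radialForm P d A B k j) Q =
      d * (4 * A' (‖Q - P‖ ^ 2) + 4 * ‖Q - P‖ ^ 2 * A'') +
        2 * (if k = j then 1 else 0) * B (‖Q - P‖ ^ 2) +
        (Q - P) k * (Q - P) j * (12 * B' (‖Q - P‖ ^ 2) + 4 * ‖Q - P‖ ^ 2 * B'') := by
  simp only [laplacian2, Fin.sum_univ_two, pd2_pd2_radialForm d k j _ hA hA' hB hB' hQ]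
  rw [norm_sq_fin_two (Q - P)]
  fin_cases k <;> fin_cases j <;> simp <;> ring

lemma Hac_eventuallyEq_radialForm (a c : ℝ) (k j : Fin 2) (hQ : Q ≠ P) :
    Hac P a c k j =ᶠ[𝓝 Q] radialForm P (if k = j then 1 else 0)
      (fun t => (a + 4 * c + 1 / 32) * t - 3 / 16 * (t * log t))
      (fun t => 8 * c + log t / 8 + 3 / 16) k j := by
  have hF : ∀ t > 0, HasDerivAt (fun t => t ^ 2 * (c + log t / 64))
      (2 * t * (c + log t / 64) + t / 64) t := fun t ht =>
    ((hasDerivAt_pow 2 t).fun_mul (((hasDerivAt_log ht.ne').div_const 64).const_add c)).congr_deriv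
      (by field_simp; ring)
  have hF' : ∀ t > 0, HasDerivAt (fun t => 2 * t * (c + log t / 64) + t / 64)
      (2 * c + log t / 32 + 3 / 64) t := fun t ht =>
    ((((hasDerivAt_id' t).const_mul 2).fun_mul
      (((hasDerivAt_log ht.ne').div_const 64).const_add c)).fun_add
        ((hasDerivAt_id' t).div_const 64)).congr_deriv (by field_simp; ring)
  have hprofile : (fun y : ℝ² => ‖y - P‖ ^ 4 * (c + 1 / 32 * log ‖y - P‖)) =
      fun y => (‖y - P‖ ^ 2) ^ 2 * (c + log (‖y - P‖ ^ 2) / 64) := by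
    funext y
    rw [log_pow]
    ring
  filter_upwards [eventually_ne_nhds hQ] with x hx
  rw [Hac, hprofile, pd2_pd2_comp_norm_sub_sq hF (hF' _ (norm_sub_sq_pos hx)) hx, radialForm]
  simp only [log_pow]
  ring

end Plane

/-- ∇² H̃^{a,c}_{kj}(Q,P) = Ũ_{kj}(Q,P) + (4a + 32c − 1) δ_{kj} for all Q ≠ P, where
Ũ_{kj}(Q,P) = −δ_{kj} log r + R_k R_j/r². -/
theorem twoD_parameterized_laplacian
    (P : EuclideanSpace ℝ (Fin 2)) (k j : Fin 2) (a c : ℝ)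
    (Q : EuclideanSpace ℝ (Fin 2)) (hQ : Q ≠ P) :
    (∑ l : Fin 2, pd2 (fun Q' => pd2 (Hac P a c k j) l Q') l Q) =
      (-(if k = j then (1 : ℝ) else 0) * Real.log ‖Q - P‖ +
          (Q - P) k * (Q - P) j / ‖Q - P‖ ^ 2) +
        (4 * a + 32 * c - 1) * (if k = j then (1 : ℝ) else 0) := by
  have hr : ‖Q - P‖ ≠ 0 := (norm_sub_pos_iff.2 hQ).ne'
  have hs := norm_sub_sq_pos hQ
  have hA : ∀ t > 0, HasDerivAt (fun t => (a + 4 * c + 1 / 32) * t - 3 / 16 * (t * log t))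
      (a + 4 * c + 1 / 32 - 3 / 16 * (log t + 1)) t := fun t ht =>
    (((hasDerivAt_id t).const_mul _).fun_sub
      ((hasDerivAt_mul_log ht.ne').const_mul (3 / 16))).congr_deriv (by ring)
  have hA' : HasDerivAt (fun t => a + 4 * c + 1 / 32 - 3 / 16 * (log t + 1))
      (-(3 / 16) / ‖Q - P‖ ^ 2) (‖Q - P‖ ^ 2) :=
    ((((hasDerivAt_log hs.ne').add_const 1).const_mul (3 / 16)).const_sub _).congr_deriv
      (by ring)
  have hB : ∀ t > 0, HasDerivAt (fun t => 8 * c + log t / 8 + 3 / 16) (8 * t)⁻¹ t :=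
    fun t ht => ((((hasDerivAt_log ht.ne').div_const 8).const_add (8 * c)).add_const
      (3 / 16)).congr_deriv (by field_simp)
  have hB' : HasDerivAt (fun t => (8 * t)⁻¹) (-(1 / 8) / (‖Q - P‖ ^ 2) ^ 2) (‖Q - P‖ ^ 2) :=
    (((hasDerivAt_id _).const_mul 8).inv (by positivity)).congr_deriv (by field_simp)
  change laplacian2 (Hac P a c k j) Q = _
  rw [laplacian2_congr (Hac_eventuallyEq_radialForm a c k j hQ),
    laplacian2_radialForm _ k j hA hA' hB hB' hQ, log_pow]
  field_simp
  ring
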